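/- arXiv:1805.00076 — 9 statements merged into one kernel-verified Lean document; each statement's English description precedes it below -/
import Mathlib

section
/- Let G be a finite simple graph, let s, f, x be three distinct vertices of G, and let p ∈ [0,1]. In the one-edge bunk bed percolation model on G with vertical vertex x and horizontal retention probability p, the probability that (s,0) is connected to (f,0) is greater than or equal to the probability that (s,0) is connected to (f,1). -/
open Finset

/-- The random subgraph of the bunk bed graph `G □ K₂` determined by a set `S₀` of retained
horizontal edges in the bottom copy `G × {false}`, a set `S₁` of retained horizontal edges
in the top copy `G × {true}`, and a set `X` of vertices of `G` whose vertical edges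
`{(x,false),(x,true)}` are present. -/
def bunkGraph {V : Type*} (S₀ S₁ : Finset (Sym2 V)) (X : Set V) :
    SimpleGraph (V × Bool) :=
  SimpleGraph.fromEdgeSet
    (Sym2.map (fun u => (u, false)) '' (S₀ : Set (Sym2 V)) ∪
     Sym2.map (fun u => (u, true)) '' (S₁ : Set (Sym2 V)) ∪
     (fun x => s((x, false), (x, true))) '' X)

open Classical in
/-- The probability, in the bunk bed percolation model on `G` with vertical vertex set `X`
and horizontal retention probability `p`, that the vertices `a` and `b` of `G □ K₂` lie in
the same connected component: for each pair `(S₀, S₁)` of subsets of `E(G)`, the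
configuration with exactly the horizontal edges `S₀` (bottom), `S₁` (top) and the vertical
edges at `X` has weight `p^(|S₀|+|S₁|)·(1−p)^(2|E(G)|−|S₀|−|S₁|)`. -/
noncomputable def bunkProb {V : Type*} [Fintype V] [DecidableEq V]
    (G : SimpleGraph V) [DecidableRel G.Adj] (X : Set V) (p : ℝ)
    (a b : V × Bool) : ℝ :=
  ∑ S₀ ∈ G.edgeFinset.powerset, ∑ S₁ ∈ G.edgeFinset.powerset,
    p ^ (S₀.card + S₁.card) *
      (1 - p) ^ (2 * G.edgeFinset.card - S₀.card - S₁.card) *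
      (if (bunkGraph S₀ S₁ X).Reachable a b then 1 else 0)

namespace BunkAux

variable {V : Type*} {S₀ S₁ : Finset (Sym2 V)} {x : V}

/-- The level graph: bottom (`false`) is determined by `S₀`, top by `S₁`. -/
def L (S₀ S₁ : Finset (Sym2 V)) (b : Bool) : SimpleGraph V :=
  SimpleGraph.fromEdgeSet ↑(if b then S₁ else S₀)

lemma bunk_adj_cases {a b : V × Bool} (h : (bunkGraph S₀ S₁ {x}).Adj a b) :
    (a.2 = b.2 ∧ (L S₀ S₁ a.2).Adj a.1 b.1) ∨ (a.1 = x ∧ b.1 = x ∧ a.2 ≠ b.2) := by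
  rw [bunkGraph, SimpleGraph.fromEdgeSet_adj] at h
  obtain ⟨hmem, hne⟩ := h
  rcases hmem with (h | h) | h
  · obtain ⟨e, he, hmap⟩ := h
    induction e using Sym2.ind with
    | _ u v =>
      rw [Sym2.map_pair_eq, Sym2.eq_iff] at hmap
      rcases hmap with ⟨ha, hb⟩ | ⟨ha, hb⟩ <;>
      · left
        subst ha; subst hb
        refine ⟨rfl, ?_⟩
        rw [L, SimpleGraph.fromEdgeSet_adj]
        constructor
        · simpa [Sym2.eq_swap] using he
        · simpa using hne
  · obtain ⟨e, he, hmap⟩ := h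
    induction e using Sym2.ind with
    | _ u v =>
      rw [Sym2.map_pair_eq, Sym2.eq_iff] at hmap
      rcases hmap with ⟨ha, hb⟩ | ⟨ha, hb⟩ <;>
      · left
        subst ha; subst hb
        refine ⟨rfl, ?_⟩
        rw [L, SimpleGraph.fromEdgeSet_adj]
        constructor
        · simpa [Sym2.eq_swap] using he
        · simpa using hne
  · simp only [Set.image_singleton, Set.mem_singleton_iff, Sym2.eq_iff] at h
    rcases h with ⟨ha, hb⟩ | ⟨ha, hb⟩ <;>
    · right
      subst ha; subst hb
      simp

lemma reach_decomp {a b : V × Bool} (h : (bunkGraph S₀ S₁ {x}).Reachable a b) :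
    (a.2 = b.2 ∧ (L S₀ S₁ a.2).Reachable a.1 b.1) ∨
      ((L S₀ S₁ a.2).Reachable a.1 x ∧ (L S₀ S₁ b.2).Reachable x b.1) := by
  obtain ⟨w⟩ := h
  induction w with
  | nil => exact Or.inl ⟨rfl, SimpleGraph.Reachable.refl _⟩
  | @cons a c b hac w ih =>
    rcases bunk_adj_cases hac with ⟨hbc, hadj⟩ | ⟨hax, hcx, hbc⟩
    · rcases ih with ⟨h1, h2⟩ | ⟨h1, h2⟩
      · exact Or.inl ⟨hbc.trans h1, by rw [hbc] at hadj ⊢; exact hadj.reachable.trans h2⟩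
      · exact Or.inr ⟨by rw [hbc] at hadj ⊢; exact hadj.reachable.trans h1, h2⟩
    · refine Or.inr ⟨by rw [hax], ?_⟩
      rcases ih with ⟨h1, h2⟩ | ⟨h1, h2⟩
      · rw [← h1]; rw [hcx] at h2; exact h2
      · exact h2

lemma reach_level {b : Bool} {u v : V} (h : (L S₀ S₁ b).Reachable u v) :
    (bunkGraph S₀ S₁ {x}).Reachable (u, b) (v, b) := by
  have hmap : ∀ {w w' : V}, (L S₀ S₁ b).Adj w w' →
      (bunkGraph S₀ S₁ {x}).Adj (w, b) (w', b) := by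
    intro w w' hw
    rw [L, SimpleGraph.fromEdgeSet_adj] at hw
    rw [bunkGraph, SimpleGraph.fromEdgeSet_adj]
    refine ⟨?_, by simp [hw.2]⟩
    cases b
    · exact Or.inl (Or.inl ⟨s(w, w'), hw.1, by rw [Sym2.map_pair_eq]⟩)
    · exact Or.inl (Or.inr ⟨s(w, w'), hw.1, by rw [Sym2.map_pair_eq]⟩)
  exact h.map ⟨fun w => (w, b), fun hw => hmap hw⟩

lemma vert_adj : (bunkGraph S₀ S₁ {x}).Adj (x, false) (x, true) := by
  rw [bunkGraph, SimpleGraph.fromEdgeSet_adj]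
  exact ⟨Or.inr ⟨x, rfl, rfl⟩, by simp⟩

lemma reach_bb (s f : V) :
    (bunkGraph S₀ S₁ {x}).Reachable (s, false) (f, false) ↔
      (SimpleGraph.fromEdgeSet (S₀ : Set (Sym2 V))).Reachable s f := by
  constructor
  · intro h
    rcases reach_decomp h with ⟨_, h2⟩ | ⟨h1, h2⟩
    · exact h2
    · exact h1.trans h2
  · exact fun h => reach_level (b := false) h

lemma reach_bt (s f : V) :
    (bunkGraph S₀ S₁ {x}).Reachable (s, false) (f, true) ↔
      ((SimpleGraph.fromEdgeSet (S₀ : Set (Sym2 V))).Reachable s x ∧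
        (SimpleGraph.fromEdgeSet (S₁ : Set (Sym2 V))).Reachable x f) := by
  constructor
  · intro h
    rcases reach_decomp h with ⟨h1, _⟩ | ⟨h1, h2⟩
    · simp at h1
    · exact ⟨h1, h2⟩
  · rintro ⟨h1, h2⟩
    exact (reach_level (b := false) h1).trans
      ((vert_adj).reachable.trans (reach_level (b := true) h2))

end BunkAux

/-- the bunk bed conjecture holds when exactly one vertical edge, at a vertex
`x` different from `s` and `f`, is present: the probability that `(s,0)` is connected to
`(f,0)` is at least the probability that `(s,0)` is connected to `(f,1)`. -/
theorem bunkbed_one_vertical_edge {V : Type*} [Fintype V] [DecidableEq V]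
    (G : SimpleGraph V) [DecidableRel G.Adj] (s f x : V)
    (hsf : s ≠ f) (hsx : s ≠ x) (hfx : f ≠ x)
    (p : ℝ) (hp0 : 0 ≤ p) (hp1 : p ≤ 1) :
    bunkProb G {x} p (s, false) (f, false)
      ≥ bunkProb G {x} p (s, false) (f, true) := by
  classical
  have hq0 : (0 : ℝ) ≤ 1 - p := by linarith
  set w : Finset (Sym2 V) → ℝ := fun A => p ^ A.card * (1 - p) ^ (G.edgeFinset.card - A.card) with hwdef
  set μ : Finset (Sym2 V) → ℝ := fun A => if A ⊆ G.edgeFinset then w A else 0 with hμdef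
  set F : Finset (Sym2 V) → ℝ :=
    fun A => if (SimpleGraph.fromEdgeSet (A : Set (Sym2 V))).Reachable s x then 1 else 0
    with hFdef
  set Gg : Finset (Sym2 V) → ℝ :=
    fun A => if (SimpleGraph.fromEdgeSet (A : Set (Sym2 V))).Reachable x f then 1 else 0
    with hGdef
  set Hh : Finset (Sym2 V) → ℝ :=
    fun A => if (SimpleGraph.fromEdgeSet (A : Set (Sym2 V))).Reachable s f then 1 else 0
    with hHdef
  have hw0 : ∀ A, 0 ≤ w A := fun A => mul_nonneg (pow_nonneg hp0 _) (pow_nonneg hq0 _)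
  have hμ0 : (0 : Finset (Sym2 V) → ℝ) ≤ μ := by
    intro A
    simp only [hμdef]
    split_ifs
    · exact hw0 A
    · exact le_refl 0
  have hF0 : (0 : Finset (Sym2 V) → ℝ) ≤ F := by
    intro A; simp only [hFdef]; split_ifs <;> norm_num
  have hH0 : (0 : Finset (Sym2 V) → ℝ) ≤ Hh := by
    intro A; simp only [hHdef]; split_ifs <;> norm_num
  have hG0 : (0 : Finset (Sym2 V) → ℝ) ≤ Gg := by
    intro A; simp only [hGdef]; split_ifs <;> norm_num
  have hmono : ∀ (u v : V), Monotone (fun A : Finset (Sym2 V) =>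
      (if (SimpleGraph.fromEdgeSet (A : Set (Sym2 V))).Reachable u v then (1 : ℝ) else 0)) := by
    intro u v A B hAB
    dsimp only
    split_ifs with h1 h2 h2
    · exact le_refl 1
    · exact absurd (h1.mono (SimpleGraph.fromEdgeSet_mono (Finset.coe_subset.mpr hAB))) h2
    · norm_num
    · exact le_refl 0
  have hFmono : Monotone F := hmono s x
  have hGmono : Monotone Gg := hmono x f
  -- supermodularity (in fact modularity) of μ
  have hμsup : ∀ A B : Finset (Sym2 V), μ A * μ B ≤ μ (A ⊓ B) * μ (A ⊔ B) := by
    intro A B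
    by_cases hA : A ⊆ G.edgeFinset
    · by_cases hB : B ⊆ G.edgeFinset
      · have hI : A ⊓ B ⊆ G.edgeFinset := le_trans inf_le_left hA
        have hU : A ⊔ B ⊆ G.edgeFinset := sup_le hA hB
        have hAm : A.card ≤ G.edgeFinset.card := Finset.card_le_card hA
        have hBm : B.card ≤ G.edgeFinset.card := Finset.card_le_card hB
        have hIm : (A ⊓ B).card ≤ G.edgeFinset.card := Finset.card_le_card hI
        have hUm : (A ⊔ B).card ≤ G.edgeFinset.card := Finset.card_le_card hU
        have hcard : (A ⊓ B).card + (A ⊔ B).card = A.card + B.card := by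
          simpa [Finset.inf_eq_inter, Finset.sup_eq_union] using
            Finset.card_inter_add_card_union A B
        have e1 : A.card + B.card = (A ⊓ B).card + (A ⊔ B).card := hcard.symm
        have e2 : (G.edgeFinset.card - A.card) + (G.edgeFinset.card - B.card) = (G.edgeFinset.card - (A ⊓ B).card) + (G.edgeFinset.card - (A ⊔ B).card) := by
          omega
        simp only [hμdef, if_pos hA, if_pos hB, if_pos hI, if_pos hU, hwdef]
        rw [mul_mul_mul_comm, ← pow_add, ← pow_add, e1, e2, pow_add, pow_add,
          mul_mul_mul_comm]
      · simp only [hμdef, if_neg hB, mul_zero]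
        exact mul_nonneg (hμ0 _) (hμ0 _)
    · simp only [hμdef, if_neg hA, zero_mul]
      exact mul_nonneg (hμ0 _) (hμ0 _)
  -- conversion between powerset sums and full sums
  have hconv : ∀ t : Finset (Sym2 V) → ℝ,
      ∑ S ∈ G.edgeFinset.powerset, w S * t S = ∑ A : Finset (Sym2 V), μ A * t A := by
    intro t
    rw [show (∑ S ∈ G.edgeFinset.powerset, w S * t S) = ∑ S ∈ G.edgeFinset.powerset, μ S * t S from
      Finset.sum_congr rfl fun S hS => by
        rw [Finset.mem_powerset] at hS
        simp only [hμdef]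
        rw [if_pos hS]]
    refine Finset.sum_subset (Finset.subset_univ _) fun A _ hA => ?_
    rw [Finset.mem_powerset] at hA
    simp only [hμdef]
    rw [if_neg hA, zero_mul]
  -- the weight splits
  have hsplit : ∀ S₀ ∈ G.edgeFinset.powerset, ∀ S₁ ∈ G.edgeFinset.powerset,
      p ^ (S₀.card + S₁.card) * (1 - p) ^ (2 * G.edgeFinset.card - S₀.card - S₁.card) = w S₀ * w S₁ := by
    intro S₀ h₀ S₁ h₁
    rw [Finset.mem_powerset] at h₀ h₁
    have hc₀ : S₀.card ≤ G.edgeFinset.card := Finset.card_le_card h₀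
    have hc₁ : S₁.card ≤ G.edgeFinset.card := Finset.card_le_card h₁
    have he : 2 * G.edgeFinset.card - S₀.card - S₁.card = (G.edgeFinset.card - S₀.card) + (G.edgeFinset.card - S₁.card) := by omega
    rw [he, pow_add, pow_add, hwdef]
    ring
  -- LHS computation
  have hLHS : bunkProb G {x} p (s, false) (f, false)
      = (∑ A : Finset (Sym2 V), μ A * Hh A) * (∑ A : Finset (Sym2 V), μ A * 1) := by
    rw [bunkProb, ← hconv, ← hconv, Finset.sum_mul_sum]
    refine Finset.sum_congr rfl fun S₀ h₀ => Finset.sum_congr rfl fun S₁ h₁ => ?_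
    rw [hsplit S₀ h₀ S₁ h₁]
    have : (if (bunkGraph S₀ S₁ {x}).Reachable (s, false) (f, false) then (1:ℝ) else 0)
        = Hh S₀ := by
      simp only [hHdef]
      exact if_congr (BunkAux.reach_bb s f) rfl rfl
    rw [this]
    ring
  -- RHS computation
  have hRHS : bunkProb G {x} p (s, false) (f, true)
      = (∑ A : Finset (Sym2 V), μ A * F A) * (∑ A : Finset (Sym2 V), μ A * Gg A) := by
    rw [bunkProb, ← hconv, ← hconv, Finset.sum_mul_sum]
    refine Finset.sum_congr rfl fun S₀ h₀ => Finset.sum_congr rfl fun S₁ h₁ => ?_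
    rw [hsplit S₀ h₀ S₁ h₁]
    have : (if (bunkGraph S₀ S₁ {x}).Reachable (s, false) (f, true) then (1:ℝ) else 0)
        = F S₀ * Gg S₁ := by
      simp only [hFdef, hGdef]
      rw [if_congr (BunkAux.reach_bt s f) rfl rfl]
      by_cases h1 : (SimpleGraph.fromEdgeSet (S₀ : Set (Sym2 V))).Reachable s x <;>
        by_cases h2 : (SimpleGraph.fromEdgeSet (S₁ : Set (Sym2 V))).Reachable x f <;>
        simp [h1, h2]
    rw [this]
    ring
  rw [hLHS, hRHS, ge_iff_le]
  calc (∑ A : Finset (Sym2 V), μ A * F A) * (∑ A : Finset (Sym2 V), μ A * Gg A)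
      ≤ (∑ A : Finset (Sym2 V), μ A) * (∑ A : Finset (Sym2 V), μ A * (F A * Gg A)) :=
        fkg F Gg μ hμ0 hF0 hG0 hFmono hGmono hμsup
    _ ≤ (∑ A : Finset (Sym2 V), μ A) * (∑ A : Finset (Sym2 V), μ A * Hh A) := by
        refine mul_le_mul_of_nonneg_left ?_ (Finset.sum_nonneg fun A _ => hμ0 A)
        refine Finset.sum_le_sum fun A _ => mul_le_mul_of_nonneg_left ?_ (hμ0 A)
        by_cases h1 : (SimpleGraph.fromEdgeSet (A : Set (Sym2 V))).Reachable s x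
        · by_cases h2 : (SimpleGraph.fromEdgeSet (A : Set (Sym2 V))).Reachable x f
          · simp only [hFdef, hGdef, hHdef]
            simp [h1, h2, h1.trans h2]
          · calc F A * Gg A = 0 := by simp only [hGdef]; simp [h2]
              _ ≤ Hh A := hH0 A
        · calc F A * Gg A = 0 := by simp only [hFdef]; simp [h1]
            _ ≤ Hh A := hH0 A
    _ = (∑ A : Finset (Sym2 V), μ A * Hh A) * (∑ A : Finset (Sym2 V), μ A * 1) := by
        simp only [mul_one]
        ring
end

section
/- Let (Ω, 𝒜, P) be a probability space and let D₁, D₂, B, D₁′, B′ be measurable events such that: (i) the σ-algebra generated by {D₁, D₂, B} is independent of the σ-algebra generated by {D₁′, B′}; (ii) P(D₁′) = P(D₁), P(B′) = P(B), and P(D₁′ ∩ B′) = P(D₁ ∩ B); (iii) P(D₁ ∩ D₂) ≥ P(D₁)·P(D₂), P(D₁ ∩ B) ≥ P(D₁)·P(B), P(D₂ ∩ B) ≥ P(D₂)·P(B), and P(D₁ ∩ D₂ ∩ B)·P(B) ≥ P(D₁ ∩ B)·P(D₂ ∩ B). Then P(D₁ ∩ (B ∪ B′) ∩ D₂) ≥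 P(D₁′ ∩ (B ∪ B′) ∩ D₂). -/
open MeasureTheory ProbabilityTheory

/-- the key lemma in the bunk bed proof: if the σ-algebra generated by
`{D₁, D₂, B}` is independent of the one generated by `{D₁', B'}`, the primed events are
distributed symmetrically to the unprimed ones, and `D₁, D₂, B` are positively correlated
(Harris-type inequalities), then
`P(D₁ ∩ (B ∪ B') ∩ D₂) ≥ P(D₁' ∩ (B ∪ B') ∩ D₂)`. -/
theorem bunkbed_lemma {Ω : Type*} [MeasurableSpace Ω]
    (P : Measure Ω) [IsProbabilityMeasure P]
    (D₁ D₂ B D₁' B' : Set Ω)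
    (hD₁ : MeasurableSet D₁) (hD₂ : MeasurableSet D₂) (hB : MeasurableSet B)
    (hD₁' : MeasurableSet D₁') (hB' : MeasurableSet B')
    (hindep : Indep (MeasurableSpace.generateFrom {D₁, D₂, B})
      (MeasurableSpace.generateFrom {D₁', B'}) P)
    (hsym₁ : P D₁' = P D₁) (hsym₂ : P B' = P B) (hsym₃ : P (D₁' ∩ B') = P (D₁ ∩ B))
    (hpos₁ : P (D₁ ∩ D₂) ≥ P D₁ * P D₂)
    (hpos₂ : P (D₁ ∩ B) ≥ P D₁ * P B)
    (hpos₃ : P (D₂ ∩ B) ≥ P D₂ * P B)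
    (hpos₄ : P (D₁ ∩ D₂ ∩ B) * P B ≥ P (D₁ ∩ B) * P (D₂ ∩ B)) :
    P (D₁ ∩ (B ∪ B') ∩ D₂) ≥ P (D₁' ∩ (B ∪ B') ∩ D₂) := by
  classical
  set m₁ := MeasurableSpace.generateFrom ({D₁, D₂, B} : Set (Set Ω)) with hm₁
  set m₂ := MeasurableSpace.generateFrom ({D₁', B'} : Set (Set Ω)) with hm₂
  have hind := (ProbabilityTheory.Indep_iff m₁ m₂ P).mp hindep
  have hD₁m : MeasurableSet[m₁] D₁ := MeasurableSpace.measurableSet_generateFrom (by simp)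
  have hD₂m : MeasurableSet[m₁] D₂ := MeasurableSpace.measurableSet_generateFrom (by simp)
  have hBm : MeasurableSet[m₁] B := MeasurableSpace.measurableSet_generateFrom (by simp)
  have hD₁'m : MeasurableSet[m₂] D₁' := MeasurableSpace.measurableSet_generateFrom (by simp)
  have hB'm : MeasurableSet[m₂] B' := MeasurableSpace.measurableSet_generateFrom (by simp)
  -- independence consequences
  have ind1 : P ((D₁ ∩ D₂ ∩ Bᶜ) ∩ B') = P (D₁ ∩ D₂ ∩ Bᶜ) * P B' :=
    hind _ _ ((hD₁m.inter hD₂m).inter hBm.compl) hB'm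
  have ind2 : P (D₂ ∩ (D₁' ∩ B')) = P D₂ * P (D₁' ∩ B') :=
    hind _ _ hD₂m (hD₁'m.inter hB'm)
  have ind3 : P ((D₂ ∩ B) ∩ (D₁' ∩ B'ᶜ)) = P (D₂ ∩ B) * P (D₁' ∩ B'ᶜ) :=
    hind _ _ (hD₂m.inter hBm) (hD₁'m.inter hB'm.compl)
  -- set decompositions
  have e1 : D₁ ∩ (B ∪ B') ∩ D₂ = (D₁ ∩ D₂ ∩ B) ∪ ((D₁ ∩ D₂ ∩ Bᶜ) ∩ B') := by
    ext ω
    simp only [Set.mem_inter_iff, Set.mem_union, Set.mem_compl_iff]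
    tauto
  have e2 : D₁' ∩ (B ∪ B') ∩ D₂ = (D₂ ∩ (D₁' ∩ B')) ∪ ((D₂ ∩ B) ∩ (D₁' ∩ B'ᶜ)) := by
    ext ω
    simp only [Set.mem_inter_iff, Set.mem_union, Set.mem_compl_iff]
    tauto
  have dj1 : Disjoint (D₁ ∩ D₂ ∩ B) ((D₁ ∩ D₂ ∩ Bᶜ) ∩ B') := by
    rw [Set.disjoint_left]
    rintro ω ⟨⟨_, _⟩, hb⟩ ⟨⟨⟨_, _⟩, hbc⟩, _⟩
    exact hbc hb
  have dj2 : Disjoint (D₂ ∩ (D₁' ∩ B')) ((D₂ ∩ B) ∩ (D₁' ∩ B'ᶜ)) := by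
    rw [Set.disjoint_left]
    rintro ω ⟨_, _, hb⟩ ⟨⟨_, _⟩, _, hbc⟩
    exact hbc hb
  have hL : P (D₁ ∩ (B ∪ B') ∩ D₂)
      = P (D₁ ∩ D₂ ∩ B) + P (D₁ ∩ D₂ ∩ Bᶜ) * P B' := by
    rw [e1, measure_union dj1 (((hD₁.inter hD₂).inter hB.compl).inter hB'), ind1]
  have hR : P (D₁' ∩ (B ∪ B') ∩ D₂)
      = P D₂ * P (D₁' ∩ B') + P (D₂ ∩ B) * P (D₁' ∩ B'ᶜ) := by
    rw [e2, measure_union dj2 ((hD₂.inter hB).inter (hD₁'.inter hB'.compl)), ind2, ind3]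
  -- splitting identities
  have split1 : P (D₁ ∩ D₂ ∩ B) + P (D₁ ∩ D₂ ∩ Bᶜ) = P (D₁ ∩ D₂) := by
    have := measure_inter_add_diff (μ := P) (D₁ ∩ D₂) hB
    rwa [Set.diff_eq] at this
  have split2 : P (D₁' ∩ B') + P (D₁' ∩ B'ᶜ) = P D₁' := by
    have := measure_inter_add_diff (μ := P) D₁' hB'
    rwa [Set.diff_eq] at this
  -- move to the reals
  have hne : ∀ s : Set Ω, P s ≠ ⊤ := fun s => measure_ne_top P s
  rw [hL, hR, ge_iff_le, ← ENNReal.toReal_le_toReal (by finiteness) (by finiteness)]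
  rw [ENNReal.toReal_add (by finiteness) (by finiteness),
      ENNReal.toReal_add (by finiteness) (by finiteness),
      ENNReal.toReal_mul, ENNReal.toReal_mul, ENNReal.toReal_mul]
  set p1 := (P D₁).toReal
  set p2 := (P D₂).toReal
  set b := (P B).toReal
  set a := (P (D₁ ∩ B)).toReal
  set c := (P (D₂ ∩ B)).toReal
  set x := (P (D₁ ∩ D₂ ∩ B)).toReal
  set u := (P (D₁ ∩ D₂ ∩ Bᶜ)).toReal
  set y := (P (D₁ ∩ D₂)).toReal
  set v := (P (D₁' ∩ B'ᶜ)).toReal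
  have hb' : (P B').toReal = b := by rw [hsym₂]
  have hab' : (P (D₁' ∩ B')).toReal = a := by rw [hsym₃]
  have hsplit1 : x + u = y := by
    rw [← ENNReal.toReal_add (hne _) (hne _), split1]
  have hsplit2 : a + v = p1 := by
    rw [← hab', ← ENNReal.toReal_add (hne _) (hne _), split2, hsym₁]
  have h1 : y ≥ p1 * p2 := by
    rw [ge_iff_le, ← ENNReal.toReal_mul]
    exact ENNReal.toReal_mono (hne _) hpos₁
  have h2 : a ≥ p1 * b := by
    rw [ge_iff_le, ← ENNReal.toReal_mul]
    exact ENNReal.toReal_mono (hne _) hpos₂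
  have h3 : c ≥ p2 * b := by
    rw [ge_iff_le, ← ENNReal.toReal_mul]
    exact ENNReal.toReal_mono (hne _) hpos₃
  have h4 : x * b ≥ a * c := by
    rw [ge_iff_le, ← ENNReal.toReal_mul, ← ENNReal.toReal_mul]
    exact ENNReal.toReal_mono (by finiteness) hpos₄
  have hab : a ≤ b := ENNReal.toReal_mono (hne _) (measure_mono Set.inter_subset_right)
  have hcb : c ≤ b := ENNReal.toReal_mono (hne _) (measure_mono Set.inter_subset_right)
  have hb1 : b ≤ 1 := by
    have h := ENNReal.toReal_mono (ENNReal.one_ne_top) (prob_le_one (μ := P) (s := B))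
    simpa using h
  have hx0 : 0 ≤ x := ENNReal.toReal_nonneg
  have hu0 : 0 ≤ u := ENNReal.toReal_nonneg
  have hv0 : 0 ≤ v := ENNReal.toReal_nonneg
  have ha0 : 0 ≤ a := ENNReal.toReal_nonneg
  have hc0 : 0 ≤ c := ENNReal.toReal_nonneg
  have hb0 : 0 ≤ b := ENNReal.toReal_nonneg
  have hp10 : 0 ≤ p1 := ENNReal.toReal_nonneg
  have hp20 : 0 ≤ p2 := ENNReal.toReal_nonneg
  rw [hb', hab']
  -- goal : p2 * a + c * v ≤ x + u * b
  rcases eq_or_lt_of_le hb0 with hb0' | hbpos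
  · have ha : a = 0 := le_antisymm (hb0' ▸ hab) ha0
    have hc : c = 0 := le_antisymm (hb0' ▸ hcb) hc0
    rw [ha, hc, ← hb0']
    nlinarith
  · have hu : u = y - x := by linarith
    have hv : v = p1 - a := by linarith
    have t1 : (1 - b) * (x * b - a * c) ≥ 0 :=
      mul_nonneg (by linarith) (by linarith)
    have t2 : (y - p1 * p2) * (b * b) ≥ 0 :=
      mul_nonneg (by linarith) (mul_nonneg hb0 hb0)
    have t3 : (a - p1 * b) * (c - p2 * b) ≥ 0 :=
      mul_nonneg (by linarith) (by linarith)
    have key : b * (x + (y - x) * b) ≥ b * (p2 * a + c * (p1 - a)) := by nlinarith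
    rw [hu, hv]
    exact le_of_mul_le_mul_left key hbpos
end

section
/- Let F_k denote the k-th Fibonacci number (F₀ = 0, F₁ = 1, F_{k+2} = F_{k+1} + F_k), and define x_n = Σ_{k=0}^{n} C(n,k)·F_k³. Then for all n ≥ 0, x_{n+4} = 7·x_{n+3} − 9·x_{n+2} − 2·x_{n+1} + 4·x_n. -/
private def Y (j n : ℕ) : ℤ :=
  ∑ k ∈ Finset.range (n + 1), (n.choose k : ℤ) * (Nat.fib (k + j) : ℤ) ^ 3

private lemma Y_succ (j n : ℕ) : Y j (n + 1) = Y j n + Y (j + 1) n := by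
  unfold Y
  rw [Finset.sum_range_succ' (fun k => (((n+1).choose k : ℤ)) * (Nat.fib (k + j) : ℤ) ^ 3)]
  have h1 : ∀ k ∈ Finset.range (n+1),
      ((n+1).choose (k+1) : ℤ) * (Nat.fib (k + 1 + j) : ℤ) ^ 3
      = (n.choose k : ℤ) * (Nat.fib (k + (j+1)) : ℤ) ^ 3
        + (n.choose (k+1) : ℤ) * (Nat.fib ((k+1) + j) : ℤ) ^ 3 := by
    intro k _
    have e : k + 1 + j = k + (j + 1) := by omega
    rw [Nat.choose_succ_succ, e]
    push_cast
    ring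
  rw [Finset.sum_congr rfl h1, Finset.sum_add_distrib]
  have h2 : ∑ k ∈ Finset.range (n+1), (n.choose (k+1) : ℤ) * (Nat.fib ((k+1) + j) : ℤ) ^ 3
      = ∑ k ∈ Finset.range (n+1), (n.choose k : ℤ) * (Nat.fib (k + j) : ℤ) ^ 3
        - (n.choose 0 : ℤ) * (Nat.fib (0 + j) : ℤ) ^ 3 := by
    rw [Finset.sum_range_succ' (fun k => ((n.choose k : ℤ)) * (Nat.fib (k + j) : ℤ) ^ 3)]
    have : (n.choose (n+1) : ℤ) * (Nat.fib ((n+1) + j) : ℤ) ^ 3 = 0 := by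
      rw [Nat.choose_succ_self]; push_cast; ring
    rw [Finset.sum_range_succ]
    rw [this]
    ring
  rw [h2]
  simp [Nat.choose_zero_right]
  ring

private lemma fibcube (m : ℕ) : ((Nat.fib (m+4) : ℤ))^3
    = 3*(Nat.fib (m+3):ℤ)^3 + 6*(Nat.fib (m+2):ℤ)^3 - 3*(Nat.fib (m+1):ℤ)^3 - (Nat.fib m:ℤ)^3 := by
  have h2 : Nat.fib (m+2) = Nat.fib m + Nat.fib (m+1) := Nat.fib_add_two
  have h3' : Nat.fib (m+3) = Nat.fib (m+1) + Nat.fib (m+2) := Nat.fib_add_two (n := m+1)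
  have h4' : Nat.fib (m+4) = Nat.fib (m+2) + Nat.fib (m+3) := Nat.fib_add_two (n := m+2)
  have h3 : Nat.fib (m+3) = Nat.fib m + 2 * Nat.fib (m+1) := by omega
  have h4 : Nat.fib (m+4) = 2 * Nat.fib m + 3 * Nat.fib (m+1) := by omega
  rw [h2, h3, h4]; push_cast; ring

private lemma Y_rec (j n : ℕ) :
    Y (j+4) n = 3 * Y (j+3) n + 6 * Y (j+2) n - 3 * Y (j+1) n - Y j n := by
  unfold Y
  rw [Finset.mul_sum, Finset.mul_sum, Finset.mul_sum, ← Finset.sum_add_distrib,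
    ← Finset.sum_sub_distrib, ← Finset.sum_sub_distrib]
  apply Finset.sum_congr rfl
  intro k _
  have e4 : k + (j+4) = (k+j) + 4 := by omega
  have e3 : k + (j+3) = (k+j) + 3 := by omega
  have e2 : k + (j+2) = (k+j) + 2 := by omega
  have e1 : k + (j+1) = (k+j) + 1 := by omega
  rw [e4, e3, e2, e1, fibcube (k+j)]
  ring

/-- The binomial transform `x n = Σ_{k=0}^n C(n,k)·F_k³` of the cubes of the
Fibonacci numbers satisfies `x (n+4) = 7·x (n+3) − 9·x (n+2) − 2·x (n+1) + 4·x n`. -/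
theorem binomial_transform_fib_cubed_recurrence
    (x : ℕ → ℤ)
    (hx : ∀ n : ℕ, x n = ∑ k ∈ Finset.range (n + 1), (n.choose k : ℤ) * (Nat.fib k : ℤ) ^ 3) :
    ∀ n : ℕ, x (n + 4) = 7 * x (n + 3) - 9 * x (n + 2) - 2 * x (n + 1) + 4 * x n := by
  intro n
  have hx0 : ∀ m, x m = Y 0 m := by
    intro m; rw [hx]; unfold Y; simp
  have a0 := Y_succ 0 n
  have a1 := Y_succ 0 (n+1)
  have a2 := Y_succ 0 (n+2)
  have a3 := Y_succ 0 (n+3)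
  have b0 := Y_succ 1 n
  have b1 := Y_succ 1 (n+1)
  have b2 := Y_succ 1 (n+2)
  have c0 := Y_succ 2 n
  have c1 := Y_succ 2 (n+1)
  have d0 := Y_succ 3 n
  have r := Y_rec 0 n
  rw [hx0, hx0, hx0, hx0, hx0]
  linarith
end

section
/- Fix an integer m ≥ 1 and let (a_k) be the m-Fibonacci sequence defined by a₀ = 0, a₁ = 1, and a_{k+2} = m·a_{k+1} + a_k for k ≥ 0. Define x_n = Σ_{k=0}^{n} C(n,k)·a_k. Then for all n ≥ 0, x_{n+2} = (m+2)·x_{n+1} − m·x_n. -/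
lemma binom_step (b : ℕ → ℤ) (n : ℕ) :
    ∑ k ∈ Finset.range (n + 2), ((n + 1).choose k : ℤ) * b k
      = ∑ k ∈ Finset.range (n + 1), (n.choose k : ℤ) * b k
        + ∑ k ∈ Finset.range (n + 1), (n.choose k : ℤ) * b (k + 1) := by
  rw [Finset.sum_range_succ' _ (n + 1)]
  have h : ∀ k ∈ Finset.range (n + 1),
      ((n + 1).choose (k + 1) : ℤ) * b (k + 1)
        = (n.choose k : ℤ) * b (k + 1) + (n.choose (k + 1) : ℤ) * b (k + 1) := by
    intro k _
    rw [Nat.choose_succ_succ]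
    push_cast
    ring
  rw [Finset.sum_congr rfl h, Finset.sum_add_distrib]
  have h2 : ∑ k ∈ Finset.range (n + 1), (n.choose (k + 1) : ℤ) * b (k + 1)
      + ((n + 1).choose 0 : ℤ) * b 0
      = ∑ k ∈ Finset.range (n + 1), (n.choose k : ℤ) * b k := by
    rw [Finset.sum_range_succ' (fun k => (n.choose k : ℤ) * b k) n]
    rw [Finset.sum_range_succ]
    simp [Nat.choose_succ_self]
  linarith [h2]

/-- For the m-Fibonacci sequence (`a₀ = 0`, `a₁ = 1`,
`a (k+2) = m·a (k+1) + a k`) with `m ≥ 1`, the binomial transform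
`x n = Σ_{k=0}^n C(n,k)·a_k` satisfies `x (n+2) = (m+2)·x (n+1) − m·x n`. -/
theorem binomial_transform_m_fibonacci
    (m : ℤ) (hm : 1 ≤ m)
    (a : ℕ → ℤ) (ha0 : a 0 = 0) (ha1 : a 1 = 1)
    (ha : ∀ k : ℕ, a (k + 2) = m * a (k + 1) + a k)
    (x : ℕ → ℤ)
    (hx : ∀ n : ℕ, x n = ∑ k ∈ Finset.range (n + 1), (n.choose k : ℤ) * a k) :
    ∀ n : ℕ, x (n + 2) = (m + 2) * x (n + 1) - m * x n := by
  set y : ℕ → ℤ := fun n => ∑ k ∈ Finset.range (n + 1), (n.choose k : ℤ) * a (k + 1) with hy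
  have hxy : ∀ n : ℕ, x (n + 1) = x n + y n := by
    intro n
    rw [hx (n + 1), hx n, hy]
    exact binom_step a n
  have hyy : ∀ n : ℕ, y (n + 1) = x n + (m + 1) * y n := by
    intro n
    have := binom_step (fun k => a (k + 1)) n
    simp only [hy]
    rw [this]
    have h2 : ∑ k ∈ Finset.range (n + 1), (n.choose k : ℤ) * a (k + 1 + 1)
        = ∑ k ∈ Finset.range (n + 1), ((n.choose k : ℤ) * a k + m * ((n.choose k : ℤ) * a (k + 1))) := by
      apply Finset.sum_congr rfl
      intro k _
      rw [ha k]
      ring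
    rw [h2, Finset.sum_add_distrib, ← Finset.mul_sum, hx n]
    ring
  intro n
  have h2 : x (n + 2) = x (n + 1) + y (n + 1) := hxy (n + 1)
  have hy' : y n = x (n + 1) - x n := by have := hxy n; linarith
  rw [h2, hyy n, hy']
  ring
end

section
/- Fix integers d ≥ 1 and n ≥ 0. Let K_d(n) be the number of sequences of n steps, each step a nonzero vector in {−1,0,1}^d, whose vector sum is zero (closed walks of a king on the d-dimensional chessboard ℤ^d), and let T_k be the number of sequences of k elements of {−1,0,1} whose sum is zero (the central trinomial coefficients). Then K_d(n) = Σ_{k=0}^{n} (−1)^{n−k}·C(n,k)·T_k^d. -/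
/-!
Walks whose steps range over the whole cube `{-1,0,1}^d`, zero step included, are easy to
count: the coordinates are independent, so there are `T_k ^ d` closed ones of length `k`.
Inclusion–exclusion over the set of times at which the step is forced to be zero isolates the
walks with no zero step, and a walk that vanishes outside a `k`-element set of times is just a
closed walk of length `k`; this produces the term `(-1)^(n-k) C(n,k) T_k^d`.
-/

open Finset

/-- The number of closed king walks of length `n` on the `d`-dimensional chessboard `ℤ^d`:
sequences of `n` steps, each a nonzero vector in `{−1,0,1}^d`, whose vector sum is zero. -/
def kingWalks (d n : ℕ) : ℕ :=
  ((Fintype.piFinset (fun _ : Fin n =>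
      (Fintype.piFinset (fun _ : Fin d => ({-1, 0, 1} : Finset ℤ))).erase 0)).filter
    (fun w => ∑ i, w i = 0)).card

/-- The `k`-th central trinomial coefficient: the number of sequences of `k` elements of
`{−1,0,1}` whose sum is zero. -/
def centralTrinomial (k : ℕ) : ℕ :=
  ((Fintype.piFinset (fun _ : Fin k => ({-1, 0, 1} : Finset ℤ))).filter
    (fun w => ∑ i, w i = 0)).card

section ClosedWalks

variable {ι κ G : Type*} [Fintype ι] [AddCommMonoid G]

lemma sum_eq_sum_coe_of_eq_zero {T : Finset ι} {w : ι → G} (hw : ∀ i ∉ T, w i = 0) :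
    ∑ i, w i = ∑ i : T, w i := by
  rw [sum_coe_sort, sum_subset (subset_univ T) fun i _ hi => hw i hi]

variable [DecidableEq ι] [Fintype κ] [DecidableEq κ] [DecidableEq G]

variable (ι) in
def closedWalks (s : Finset G) : Finset (ι → G) :=
  {w ∈ Fintype.piFinset fun _ : ι => s | ∑ i, w i = 0}

@[simp]
lemma mem_closedWalks {s : Finset G} {w : ι → G} :
    w ∈ closedWalks ι s ↔ (∀ i, w i ∈ s) ∧ ∑ i, w i = 0 := by
  simp [closedWalks]

lemma card_closedWalks_congr (e : ι ≃ κ) (s : Finset G) :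
    #(closedWalks ι s) = #(closedWalks κ s) :=
  card_equiv (e.arrowCongr (Equiv.refl G)) fun w => by
    simp [e.symm.forall_congr_left, Equiv.sum_comp e.symm w]

lemma card_closedWalks_piFinset (t : Finset G) :
    #(closedWalks ι (Fintype.piFinset fun _ : κ => t))
      = #(closedWalks ι t) ^ Fintype.card κ := by
  rw [← Finset.card_univ, ← prod_const, ← Fintype.card_piFinset]
  refine card_equiv (Equiv.piComm fun _ _ => G) fun w => ?_
  simp only [mem_closedWalks, Fintype.mem_piFinset, Equiv.piComm_apply, funext_iff,
    Finset.sum_apply, Pi.zero_apply, forall_and]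
  rw [forall_comm]

lemma card_filter_closedWalks_eq_zero_off {s : Finset G} (hs : 0 ∈ s) (T : Finset ι) :
    #{w ∈ closedWalks ι s | ∀ i ∉ T, w i = 0} = #(closedWalks T s) := by
  refine card_nbij' (fun w i => w i) (fun v i => if h : i ∈ T then v ⟨i, h⟩ else 0)
    ?_ ?_ ?_ ?_
  · intro w hw
    simp only [coe_filter, Set.mem_ofPred_eq, mem_closedWalks, mem_coe] at hw ⊢
    exact ⟨fun i => hw.1.1 i, sum_eq_sum_coe_of_eq_zero hw.2 ▸ hw.1.2⟩
  · intro v hv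
    simp only [coe_filter, Set.mem_ofPred_eq, mem_closedWalks, mem_coe] at hv ⊢
    refine ⟨⟨fun i => ?_, ?_⟩, fun i hi => dif_neg hi⟩
    · split_ifs
      exacts [hv.1 _, hs]
    · rw [sum_eq_sum_coe_of_eq_zero fun i hi => dif_neg hi]
      simpa using hv.2
  · intro w hw
    simp only [coe_filter, Set.mem_ofPred_eq] at hw
    funext i
    dsimp only
    split_ifs with h
    exacts [rfl, (hw.2 i h).symm]
  · intro v _
    simp

lemma card_filter_forall_ne_zero {M : Type*} [Zero M] [DecidableEq M] (A : Finset (ι → M)) :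
    (#{w ∈ A | ∀ i, w i ≠ 0} : ℤ)
      = ∑ T ∈ univ.powerset,
          (-1) ^ (Fintype.card ι - #T) * (#{w ∈ A | ∀ i ∉ T, w i = 0} : ℤ) := by
  have indicator (w : ι → M) : (if ∀ i, w i ≠ 0 then 1 else 0 : ℤ)
      = ∑ T ∈ univ.powerset,
          (-1) ^ (Fintype.card ι - #T) * if ∀ i ∉ T, w i = 0 then 1 else 0 := by
    calc (if ∀ i, w i ≠ 0 then 1 else 0 : ℤ)
        = ∏ i, (1 + -if w i = 0 then 1 else 0 : ℤ) := by
          rw [← Fintype.prod_boole]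
          exact prod_congr rfl fun i _ => by split_ifs <;> simp_all
      _ = ∑ T ∈ univ.powerset,
            (∏ i ∈ T, 1) * ∏ i ∈ univ \ T, -if w i = 0 then 1 else 0 :=
          prod_add _ _ _
      _ = _ := by
          refine sum_congr rfl fun T _ => ?_
          simp [prod_neg, prod_boole, card_univ_sdiff]
  simp only [card_filter, Nat.cast_sum, Nat.cast_ite, Nat.cast_one, Nat.cast_zero, indicator,
    mul_sum]
  exact sum_comm

lemma card_closedWalks_erase_zero {s : Finset G} (hs : 0 ∈ s) :
    (#(closedWalks ι (s.erase 0)) : ℤ)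
      = ∑ k ∈ range (Fintype.card ι + 1),
          (-1) ^ (Fintype.card ι - k) * (Fintype.card ι).choose k
            * (#(closedWalks (Fin k) s) : ℤ) := by
  have nonzero_steps :
      closedWalks ι (s.erase 0) = {w ∈ closedWalks ι s | ∀ i, w i ≠ 0} := by
    ext w
    simp only [mem_closedWalks, mem_erase, mem_filter]
    grind
  rw [nonzero_steps, card_filter_forall_ne_zero]
  simp only [card_filter_closedWalks_eq_zero_off hs, fun T : Finset ι =>
    card_closedWalks_congr T.equivFin s]
  rw [sum_powerset_apply_card
    (fun k => (-1) ^ (Fintype.card ι - k) * (#(closedWalks (Fin k) s) : ℤ)), card_univ]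
  exact sum_congr rfl fun k _ => by rw [nsmul_eq_mul]; ring

end ClosedWalks

lemma kingWalks_eq_card_closedWalks (d n : ℕ) :
    kingWalks d n
      = #(closedWalks (Fin n)
          ((Fintype.piFinset fun _ : Fin d => ({-1, 0, 1} : Finset ℤ)).erase 0)) :=
  rfl

lemma centralTrinomial_eq_card_closedWalks (k : ℕ) :
    centralTrinomial k = #(closedWalks (Fin k) ({-1, 0, 1} : Finset ℤ)) :=
  rfl

theorem kingWalks_eq_alternating_sum_centralTrinomial_general (d n : ℕ) :
    (kingWalks d n : ℤ)
      = ∑ k ∈ Finset.range (n + 1),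
          (-1 : ℤ) ^ (n - k) * (n.choose k : ℤ) * (centralTrinomial k : ℤ) ^ d := by
  rw [kingWalks_eq_card_closedWalks, card_closedWalks_erase_zero (by simp), Fintype.card_fin]
  simp only [card_closedWalks_piFinset, Fintype.card_fin, centralTrinomial_eq_card_closedWalks,
    Nat.cast_pow]

/-- `K_d(n) = Σ_{k=0}^n (−1)^{n−k}·C(n,k)·T_k^d`. -/
theorem kingWalks_eq_alternating_sum_centralTrinomial (d n : ℕ) (hd : 1 ≤ d) :
    (kingWalks d n : ℤ)
      = ∑ k ∈ Finset.range (n + 1),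
          (-1 : ℤ) ^ (n - k) * (n.choose k : ℤ) * (centralTrinomial k : ℤ) ^ d :=
  kingWalks_eq_alternating_sum_centralTrinomial_general d n
end

section
/- The infinite series Σ_{n=0}^{∞} 1/((n⁴ + n² + 1)·n!) converges and its sum equals e/2. -/
/-!
Since `n⁴ + n² + 1 = (n² - n + 1)(n² + n + 1)`, partial fractions give
`1 / ((n⁴ + n² + 1) n!) = (1 / n! + t (n + 1) - t n) / 2` with `t n = n² / ((n² - n + 1) n!)`.
Summing, the `t`-terms telescope to `t N → 0`, and `∑ 1 / n! = e`. As the terms are nonnegative,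
convergence of the partial sums is enough for `HasSum`.
-/

open Filter Finset
open scoped Nat Topology

lemma hasSum_one_div_factorial : HasSum (fun n : ℕ => 1 / (n ! : ℝ)) (Real.exp 1) := by
  simpa [Real.exp_eq_exp_ℝ] using NormedSpace.expSeries_div_hasSum_exp (1 : ℝ)

lemma sq_sub_self_add_one_pos (x : ℝ) : 0 < x ^ 2 - x + 1 := by
  nlinarith [sq_nonneg (x - 1)]

noncomputable def telescopingTerm (n : ℕ) : ℝ := (n : ℝ) ^ 2 / (((n : ℝ) ^ 2 - n + 1) * n !)

lemma telescopingTerm_nonneg (n : ℕ) : 0 ≤ telescopingTerm n :=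
  div_nonneg (sq_nonneg _) (mul_nonneg (sq_sub_self_add_one_pos n).le (Nat.cast_nonneg _))

lemma telescopingTerm_le (n : ℕ) : telescopingTerm n ≤ 2 / n ! := by
  have hq := sq_sub_self_add_one_pos n
  have hf : (0 : ℝ) < n ! := by positivity
  rw [telescopingTerm, div_le_div_iff₀ (by positivity) hf]
  nlinarith [sq_nonneg ((n : ℝ) - 1)]

lemma tendsto_telescopingTerm_zero : Tendsto telescopingTerm atTop (𝓝 0) := by
  have h := (hasSum_one_div_factorial.summable.mul_left 2).tendsto_atTop_zero
  exact squeeze_zero telescopingTerm_nonneg (fun n => (telescopingTerm_le n).trans_eq (by ring)) h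

lemma one_div_quartic_mul_factorial_eq (n : ℕ) :
    1 / (((n : ℝ) ^ 4 + (n : ℝ) ^ 2 + 1) * n !) =
      (1 / n ! + (telescopingTerm (n + 1) - telescopingTerm n)) / 2 := by
  -- `field_simp` needs the nonvanishing of `n² ∓ n + 1` in the form it normalises them to.
  have hminus : (n : ℝ) * (n - 1) + 1 ≠ 0 := by linarith [sq_sub_self_add_one_pos n]
  have hplus : (n : ℝ) * (n + 1) + 1 ≠ 0 := by positivity
  have hfactor : (n : ℝ) ^ 4 + (n : ℝ) ^ 2 + 1 = ((n : ℝ) ^ 2 - n + 1) * ((n : ℝ) ^ 2 + n + 1) := by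
    ring
  have hshift : ((n + 1 : ℕ) : ℝ) ^ 2 - ((n + 1 : ℕ) : ℝ) + 1 = (n : ℝ) ^ 2 + n + 1 := by
    push_cast; ring
  rw [telescopingTerm, telescopingTerm, hshift, hfactor, Nat.factorial_succ, Nat.cast_mul,
    Nat.cast_succ]
  field_simp
  ring

lemma sum_range_one_div_quartic_mul_factorial (N : ℕ) :
    ∑ n ∈ range N, 1 / (((n : ℝ) ^ 4 + (n : ℝ) ^ 2 + 1) * n !) =
      (∑ n ∈ range N, 1 / (n ! : ℝ) + telescopingTerm N) / 2 := by
  simp only [one_div_quartic_mul_factorial_eq, ← sum_div, sum_add_distrib,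
    sum_range_sub telescopingTerm]
  simp [telescopingTerm]

/-- `Σ_{n=0}^∞ 1/((n⁴ + n² + 1)·n!)` converges with sum `e/2`. -/
theorem sum_inv_quartic_factorial_eq_half_e :
    HasSum (fun n : ℕ => 1 / (((n : ℝ) ^ 4 + (n : ℝ) ^ 2 + 1) * (n.factorial : ℝ)))
      (Real.exp 1 / 2) := by
  rw [hasSum_iff_tendsto_nat_of_nonneg (fun n => by positivity)]
  simp only [sum_range_one_div_quartic_mul_factorial]
  simpa using (hasSum_one_div_factorial.tendsto_sum_nat.add
    tendsto_telescopingTerm_zero).div_const 2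
end

section
/- For every integer N ≥ 0, Σ_{n=0}^{N} 1/((n⁴ + n² + 1)·n!) = (1/2)·Σ_{n=0}^{N+1} 1/n! + N/(2·(N² + N + 1)·(N+1)!). -/
/-- the partial sums of `Σ 1/((n⁴+n²+1)·n!)` satisfy
`Σ_{n=0}^N 1/((n⁴+n²+1)·n!) = (1/2)·Σ_{n=0}^{N+1} 1/n! + N/(2·(N²+N+1)·(N+1)!)`. -/
theorem partial_sum_inv_quartic_factorial (N : ℕ) :
    ∑ n ∈ Finset.range (N + 1),
        1 / (((n : ℝ) ^ 4 + (n : ℝ) ^ 2 + 1) * (n.factorial : ℝ))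
      = (1 / 2) * ∑ n ∈ Finset.range (N + 2), 1 / (n.factorial : ℝ)
        + (N : ℝ) / (2 * ((N : ℝ) ^ 2 + (N : ℝ) + 1) * ((N + 1).factorial : ℝ)) := by
  induction N with
  | zero => norm_num [Finset.sum_range_succ]
  | succ k ih =>
    rw [Finset.sum_range_succ, ih, Finset.sum_range_succ (n := k + 2)]
    have hf : ((k + 1).factorial : ℝ) ≠ 0 := by positivity
    have hf2 : ((k + 2).factorial : ℝ) ≠ 0 := by positivity
    have hq : ((k : ℝ) + 1) ^ 4 + ((k : ℝ) + 1) ^ 2 + 1 ≠ 0 := by positivity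
    have hd1 : (k : ℝ) ^ 2 + (k : ℝ) + 1 ≠ 0 := by positivity
    have hd2 : ((k : ℝ) + 1) ^ 2 + ((k : ℝ) + 1) + 1 ≠ 0 := by positivity
    have hrec : ((k + 2).factorial : ℝ) = ((k : ℝ) + 2) * ((k + 1).factorial : ℝ) := by
      rw [Nat.factorial_succ]; push_cast; ring
    push_cast [hrec]
    field_simp
    ring
end

section
/- For all positive integers a, b, n, A(a,b,n) = A(b,a,n). -/
open Finset

open Classical in
/-- `A a b n` is the number of lattice paths from `(0,0)` to `(bn, an)` using unit East and
North steps that stay on or below the line `y = (a/b)x`, i.e. every lattice point `(x,y)`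
visited satisfies `b·y ≤ a·x`.  A path is encoded as a word `w : Fin ((a+b)*n) → Bool`,
where `true` denotes a North step and `false` an East step; the point visited after `m`
steps has `y` = number of North steps and `x` = number of East steps among the first `m`. -/
noncomputable def ratPaths (a b n : ℕ) : ℕ :=
  ((Finset.univ : Finset (Fin ((a + b) * n) → Bool)).filter (fun w =>
      (Finset.univ.filter (fun i => w i = true)).card = a * n ∧
      ∀ m : ℕ, m ≤ (a + b) * n →
        b * (Finset.univ.filter (fun i : Fin ((a + b) * n) => i.val < m ∧ w i = true)).card
          ≤ a * (Finset.univ.filter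
              (fun i : Fin ((a + b) * n) => i.val < m ∧ w i = false)).card)).card

/-!
Reverse a path and swap its North and East steps. A prefix of length `m` of the new word is the
complement of the suffix of length `m` of the old one, whose step counts are the totals minus
those of the complementary prefix. Because the endpoint `(bn, an)` lies on the line, the old
prefix condition `b·y ≤ a·x` turns into `a·y' ≤ b·x'` for the new prefix, so this involution
matches the paths counted by `A(a,b,n)` with those counted by `A(b,a,n)`.
-/

namespace LatticeWord

variable {L : ℕ}

def prefixCount (w : Fin L → Bool) (c : Bool) (m : ℕ) : ℕ :=
  #{i | i.val < m ∧ w i = c}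

def revCompl (w : Fin L → Bool) : Fin L → Bool := fun i => !w i.rev

@[simp]
lemma revCompl_revCompl (w : Fin L → Bool) : revCompl (revCompl w) = w := by
  funext i
  simp [revCompl]

@[simp]
lemma prefixCount_zero (w : Fin L → Bool) (c : Bool) : prefixCount w c 0 = 0 := by
  simp [prefixCount]

lemma prefixCount_length (w : Fin L → Bool) (c : Bool) :
    prefixCount w c L = #{i | w i = c} := by
  simp [prefixCount]

lemma prefixCount_length_true_add_false (w : Fin L → Bool) :
    prefixCount w true L + prefixCount w false L = L := by
  simpa [prefixCount_length] using
    card_filter_add_card_filter_not (s := univ) (p := fun i : Fin L => w i = true)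

lemma prefixCount_revCompl_add {m : ℕ} (hm : m ≤ L) (w : Fin L → Bool) (c : Bool) :
    prefixCount (revCompl w) c m + prefixCount w (!c) (L - m) = prefixCount w (!c) L := by
  have suffix : prefixCount (revCompl w) c m = #{j | ¬ j.val < L - m ∧ w j = !c} := by
    refine card_nbij' Fin.rev Fin.rev ?_ ?_ (fun i _ => Fin.rev_rev i) (fun i _ => Fin.rev_rev i)
    all_goals
      intro i
      simp only [revCompl, coe_filter, mem_univ, true_and, Set.mem_ofPred_eq,
        Fin.val_rev, Fin.rev_rev, Bool.not_eq_eq_eq_not]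
      exact fun h => ⟨by omega, h.2⟩
  have split := card_filter_add_card_filter_not (s := univ.filter fun j : Fin L => w j = !c)
    (p := fun j : Fin L => j.val < L - m)
  simp only [filter_filter] at split
  rw [suffix, prefixCount, prefixCount_length, ← split]
  simp only [and_comm, add_comm]

def IsRatPath (a b N : ℕ) (w : Fin L → Bool) : Prop :=
  prefixCount w true L = N ∧ ∀ m ≤ L, b * prefixCount w true m ≤ a * prefixCount w false m

instance (a b N : ℕ) : DecidablePred (IsRatPath (L := L) a b N) :=
  fun _ => inferInstanceAs (Decidable (_ ∧ _))

lemma IsRatPath.revCompl {a b N M : ℕ} {w : Fin L → Bool} (hw : IsRatPath a b N w)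
    (hL : N + M = L) (hab : a * M = b * N) : IsRatPath b a M (revCompl w) := by
  obtain ⟨hN, hBelow⟩ := hw
  have hM : prefixCount w false L = M := by
    have := prefixCount_length_true_add_false w
    omega
  refine ⟨?_, fun m hm => ?_⟩
  · simpa [hM] using prefixCount_revCompl_add le_rfl w true
  · have hNorth := prefixCount_revCompl_add hm w true
    have hEast := prefixCount_revCompl_add hm w false
    have := hBelow (L - m) (Nat.sub_le L m)
    simp only [Bool.not_true, Bool.not_false, hM, hN] at hNorth hEast
    nlinarith

lemma card_isRatPath_eq {a b N M : ℕ} (hL : N + M = L) (hab : a * M = b * N) :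
    #{w : Fin L → Bool | IsRatPath a b N w} = #{w : Fin L → Bool | IsRatPath b a M w} := by
  refine card_nbij' revCompl revCompl ?_ ?_ (fun w _ => revCompl_revCompl w)
    (fun w _ => revCompl_revCompl w)
  · intro w hw
    simp only [coe_filter, mem_univ, true_and, Set.mem_ofPred_eq] at hw ⊢
    exact hw.revCompl hL hab
  · intro w hw
    simp only [coe_filter, mem_univ, true_and, Set.mem_ofPred_eq] at hw ⊢
    exact hw.revCompl (by omega) hab.symm

end LatticeWord

open LatticeWord

lemma ratPaths_eq_card_isRatPath (a b n : ℕ) :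
    ratPaths a b n = #{w : Fin ((a + b) * n) → Bool | IsRatPath a b (a * n) w} := by
  unfold ratPaths
  congr 1
  ext w
  simp [IsRatPath, prefixCount]

theorem ratPaths_symm_general (a b n : ℕ) :
    ratPaths a b n = ratPaths b a n := by
  rw [ratPaths_eq_card_isRatPath, ratPaths_eq_card_isRatPath, add_comm b a]
  exact card_isRatPath_eq (by ring) (by ring)

/-- `A(a,b,n) = A(b,a,n)` for all positive integers `a, b, n`. -/
theorem ratPaths_symm (a b n : ℕ) (ha : 0 < a) (hb : 0 < b) (hn : 0 < n) :
    ratPaths a b n = ratPaths b a n :=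
  ratPaths_symm_general a b n
end

section
/- For every positive integer n, the number of lattice paths from (0,0,0) to (n,n,n) using the unit steps (1,0,0), (0,1,0), (0,0,1) such that every lattice point (x,y,z) visited by the path satisfies x ≤ y ≤ z equals 2·(3n)!/(n!·(n+1)!·(n+2)!), i.e., equals (2/((n+1)²(n+2)))·(3n)!/(n!)³ (the 3-dimensional Catalan numbers, OEIS A005789). -/
open Finset

open Classical in
/-- The number of lattice paths from `(0,0,0)` to `(n,n,n)` using unit steps `(1,0,0)`,
`(0,1,0)`, `(0,0,1)` such that every lattice point `(x,y,z)` visited (including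
intermediate points) satisfies `x ≤ y ≤ z`.  A path is encoded as a word
`w : Fin (3*n) → Fin 3`, where the letter `0` denotes the step `(1,0,0)`, `1` denotes
`(0,1,0)` and `2` denotes `(0,0,1)`; the point reached after `m` steps has coordinates
given by the counts of each letter among the first `m` letters. -/
noncomputable def catalan3D (n : ℕ) : ℕ :=
  ((Finset.univ : Finset (Fin (3 * n) → Fin 3)).filter (fun w =>
      (∀ j : Fin 3, (Finset.univ.filter (fun i => w i = j)).card = n) ∧
      ∀ m : ℕ, m ≤ 3 * n →
        (Finset.univ.filter (fun i : Fin (3 * n) => i.val < m ∧ w i = 0)).card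
            ≤ (Finset.univ.filter (fun i : Fin (3 * n) => i.val < m ∧ w i = 1)).card ∧
          (Finset.univ.filter (fun i : Fin (3 * n) => i.val < m ∧ w i = 1)).card
            ≤ (Finset.univ.filter (fun i : Fin (3 * n) => i.val < m ∧ w i = 2)).card)).card

open Classical in
noncomputable def cnt3 {L : ℕ} (w : Fin L → Fin 3) (m : ℕ) (j : Fin 3) : ℕ :=
  (Finset.univ.filter (fun i : Fin L => i.val < m ∧ w i = j)).card

def good3 {L : ℕ} (w : Fin L → Fin 3) : Prop :=
  ∀ m ≤ L, cnt3 w m 0 ≤ cnt3 w m 1 ∧ cnt3 w m 1 ≤ cnt3 w m 2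

open Classical in
noncomputable def gcount (L a b c : ℕ) : ℕ :=
  (Finset.univ.filter (fun w : Fin L → Fin 3 =>
    cnt3 w L 0 = a ∧ cnt3 w L 1 = b ∧ cnt3 w L 2 = c ∧ good3 w)).card

noncomputable def Fq (a b c : ℕ) : ℚ :=
  ((a+b+c).factorial : ℚ) * ((b:ℚ)-a+1) * ((c:ℚ)-b+1) * ((c:ℚ)-a+2)
    / ((a.factorial : ℚ) * ((b+1).factorial : ℚ) * ((c+2).factorial : ℚ))

open Classical in
lemma cnt3_eq_sum {L : ℕ} (w : Fin L → Fin 3) (m : ℕ) (j : Fin 3) :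
    cnt3 w m j = ∑ i : Fin L, if i.val < m ∧ w i = j then 1 else 0 := by
  classical
  rw [cnt3, Finset.card_filter]

lemma cnt3_snoc_of_le {L : ℕ} (u : Fin L → Fin 3) (x : Fin 3) {m : ℕ} (hm : m ≤ L) (j : Fin 3) :
    cnt3 (Fin.snoc u x) m j = cnt3 u m j := by
  classical
  rw [cnt3_eq_sum, cnt3_eq_sum, Fin.sum_univ_castSucc]
  have h1 : ∀ i : Fin L, (if (i.castSucc.val < m ∧ (Fin.snoc u x : Fin (L+1) → Fin 3) i.castSucc = j) then (1:ℕ) else 0)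
      = if (i.val < m ∧ u i = j) then 1 else 0 := by
    intro i; simp [Fin.snoc_castSucc]
  have h2 : ¬ ((Fin.last L).val < m ∧ (Fin.snoc u x : Fin (L+1) → Fin 3) (Fin.last L) = j) := by
    rintro ⟨h, -⟩; simp [Fin.val_last] at h; omega
  simp only [h1, if_neg h2, add_zero]

lemma cnt3_snoc_top {L : ℕ} (u : Fin L → Fin 3) (x : Fin 3) (j : Fin 3) :
    cnt3 (Fin.snoc u x) (L+1) j = cnt3 u L j + if x = j then 1 else 0 := by
  classical
  rw [cnt3_eq_sum, cnt3_eq_sum, Fin.sum_univ_castSucc]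
  congr 1
  · apply Finset.sum_congr rfl
    intro i _
    have : i.castSucc.val < L + 1 := by have := i.isLt; simp [Fin.coe_castSucc]
    have hi : i.val < L := i.isLt
    have hi' : i.val < L + 1 := by omega
    simp [Fin.snoc_castSucc, this, hi, hi']
  · simp [Fin.snoc_last, Fin.val_last]

lemma cnt3_total {L : ℕ} (w : Fin L → Fin 3) :
    cnt3 w L 0 + cnt3 w L 1 + cnt3 w L 2 = L := by
  classical
  rw [cnt3_eq_sum, cnt3_eq_sum, cnt3_eq_sum, ← Finset.sum_add_distrib, ← Finset.sum_add_distrib]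
  have key : ∀ v : Fin 3, ((if v = 0 then (1:ℕ) else 0) + (if v = 1 then 1 else 0) + (if v = 2 then 1 else 0)) = 1 := by decide
  have : ∀ i : Fin L,
      ((if i.val < L ∧ w i = 0 then (1:ℕ) else 0) + (if i.val < L ∧ w i = 1 then 1 else 0)
        + (if i.val < L ∧ w i = 2 then 1 else 0)) = 1 := by
    intro i
    have hi : i.val < L := i.isLt
    simpa [hi] using key (w i)
  rw [Finset.sum_congr rfl (fun i _ => this i)]
  simp

lemma gcount_eq_zero_of_sum_ne {L a b c : ℕ} (h : a + b + c ≠ L) : gcount L a b c = 0 := by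
  classical
  rw [gcount, Finset.card_eq_zero, Finset.eq_empty_iff_forall_notMem]
  intro w hw
  rw [Finset.mem_filter] at hw
  obtain ⟨-, h0, h1, h2, -⟩ := hw
  exact h (by rw [← h0, ← h1, ← h2]; exact cnt3_total w)

lemma gcount_eq_zero_of_not_le {L a b c : ℕ} (h : ¬ (a ≤ b ∧ b ≤ c)) : gcount L a b c = 0 := by
  classical
  rw [gcount, Finset.card_eq_zero, Finset.eq_empty_iff_forall_notMem]
  intro w hw
  rw [Finset.mem_filter] at hw
  obtain ⟨-, h0, h1, h2, hg⟩ := hw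
  have := hg L le_rfl
  exact h ⟨by omega, by omega⟩

open Classical in
lemma fiber_card (L a b c : ℕ) (hab : a ≤ b) (hbc : b ≤ c) (x : Fin 3) (a' b' c' : ℕ)
    (h0 : a = a' + if x = 0 then 1 else 0)
    (h1 : b = b' + if x = 1 then 1 else 0)
    (h2 : c = c' + if x = 2 then 1 else 0) :
    ((Finset.univ.filter (fun w : Fin (L+1) → Fin 3 =>
        cnt3 w (L+1) 0 = a ∧ cnt3 w (L+1) 1 = b ∧ cnt3 w (L+1) 2 = c ∧ good3 w)).filter
      (fun w => w (Fin.last L) = x)).card = gcount L a' b' c' := by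
  classical
  rw [gcount]
  symm
  apply Finset.card_bij' (fun u _ => (Fin.snoc u x : Fin (L+1) → Fin 3)) (fun w _ => (Fin.init w : Fin L → Fin 3))
  · -- snoc membership
    intro u hu
    simp only [Finset.mem_filter, Finset.mem_univ, true_and] at hu
    obtain ⟨c0, c1, c2, hg⟩ := hu
    simp only [Finset.mem_filter, Finset.mem_univ, true_and]
    have k0 := cnt3_snoc_top u x 0
    have k1 := cnt3_snoc_top u x 1
    have k2 := cnt3_snoc_top u x 2
    refine ⟨⟨?_, ?_, ?_, ?_⟩, Fin.snoc_last _ _⟩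
    · rw [k0, c0]; omega
    · rw [k1, c1]; omega
    · rw [k2, c2]; omega
    · intro m hm
      rcases Nat.lt_or_ge m (L+1) with hm' | hm'
      · have hmL : m ≤ L := by omega
        rw [cnt3_snoc_of_le _ _ hmL, cnt3_snoc_of_le _ _ hmL, cnt3_snoc_of_le _ _ hmL]
        exact hg m hmL
      · have hEq : m = L + 1 := by omega
        subst hEq
        rw [k0, k1, k2, c0, c1, c2]
        constructor <;> omega
  · -- init membership
    intro w hw
    simp only [Finset.mem_filter, Finset.mem_univ, true_and] at hw
    obtain ⟨⟨c0, c1, c2, hg⟩, hlast⟩ := hw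
    have hw_eq : (Fin.snoc (Fin.init w) x : Fin (L+1) → Fin 3) = w := by
      rw [← hlast]; exact Fin.snoc_init_self w
    have key : ∀ j : Fin 3, cnt3 w (L+1) j = cnt3 (Fin.init w) L j + if x = j then 1 else 0 := by
      intro j; conv_lhs => rw [← hw_eq]
      rw [cnt3_snoc_top]
    simp only [Finset.mem_filter, Finset.mem_univ, true_and]
    refine ⟨?_, ?_, ?_, ?_⟩
    · have := key 0; rw [c0] at this; omega
    · have := key 1; rw [c1] at this; omega
    · have := key 2; rw [c2] at this; omega
    · intro m hm
      have e : ∀ j, cnt3 (Fin.init w) m j = cnt3 w m j := by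
        intro j
        conv_rhs => rw [← hw_eq]
        rw [cnt3_snoc_of_le _ _ hm]
      rw [e 0, e 1, e 2]
      exact hg m (by omega)
  · intro u _
    simp
  · intro w hw
    simp only [Finset.mem_filter] at hw
    rw [← hw.2]; exact Fin.snoc_init_self w

open Classical in
lemma gcount_succ (L a b c : ℕ) (hab : a ≤ b) (hbc : b ≤ c) (hsum : a + b + c = L + 1) :
    gcount (L+1) a b c = gcount L (a-1) b c + gcount L a (b-1) c + gcount L a b (c-1) := by
  classical
  have hpos : ∀ w : Fin (L+1) → Fin 3, ∀ x : Fin 3, w (Fin.last L) = x → 1 ≤ cnt3 w (L+1) x := by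
    intro w x hx
    have h := cnt3_snoc_top (Fin.init w) (w (Fin.last L)) x
    rw [Fin.snoc_init_self] at h
    rw [h, hx]; simp
  have hc : 1 ≤ c := by omega
  have t0 : ((Finset.univ.filter (fun w : Fin (L+1) → Fin 3 =>
        cnt3 w (L+1) 0 = a ∧ cnt3 w (L+1) 1 = b ∧ cnt3 w (L+1) 2 = c ∧ good3 w)).filter
      (fun w => w (Fin.last L) = 0)).card = gcount L (a-1) b c := by
    rcases Nat.eq_zero_or_pos a with ha | ha
    · subst ha
      rw [gcount_eq_zero_of_sum_ne (by omega), Finset.card_eq_zero, Finset.eq_empty_iff_forall_notMem]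
      intro w hw
      simp only [Finset.mem_filter, Finset.mem_univ, true_and] at hw
      obtain ⟨⟨c0, -, -, -⟩, hlast⟩ := hw
      have := hpos w 0 hlast
      omega
    · exact fiber_card L a b c hab hbc 0 (a-1) b c
        (by simp; exact (Nat.succ_pred_eq_of_pos ha).symm) (by simp) (by simp)
  have t1 : ((Finset.univ.filter (fun w : Fin (L+1) → Fin 3 =>
        cnt3 w (L+1) 0 = a ∧ cnt3 w (L+1) 1 = b ∧ cnt3 w (L+1) 2 = c ∧ good3 w)).filter
      (fun w => w (Fin.last L) = 1)).card = gcount L a (b-1) c := by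
    clear t0
    rcases Nat.eq_zero_or_pos b with hb | hb
    · have ha : a = 0 := by omega
      subst hb; subst ha
      rw [gcount_eq_zero_of_sum_ne (by omega), Finset.card_eq_zero, Finset.eq_empty_iff_forall_notMem]
      intro w hw
      simp only [Finset.mem_filter, Finset.mem_univ, true_and] at hw
      obtain ⟨⟨-, c1, -, -⟩, hlast⟩ := hw
      have := hpos w 1 hlast
      omega
    · exact fiber_card L a b c hab hbc 1 a (b-1) c
        (by simp) (by simp; exact (Nat.succ_pred_eq_of_pos hb).symm) (by simp)
  have t2 := fiber_card L a b c hab hbc 2 a b (c-1)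
    (by simp) (by simp) (by simp; exact (Nat.succ_pred_eq_of_pos hc).symm)
  rw [gcount, Finset.card_eq_sum_card_fiberwise
    (f := fun w => w (Fin.last L)) (t := Finset.univ) (fun w _ => Finset.mem_univ _),
    Fin.sum_univ_three, t0, t1, t2]

lemma fact_cast_ne (n : ℕ) : ((n.factorial : ℚ)) ≠ 0 :=
  Nat.cast_ne_zero.2 (Nat.factorial_ne_zero n)

lemma Fq_rec (a b c : ℕ) (hab : a ≤ b) (hbc : b ≤ c) (hc : 1 ≤ c) :
    Fq a b c = (if 1 ≤ a then Fq (a-1) b c else 0)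
      + (if 1 ≤ b then Fq a (b-1) c else 0) + Fq a b (c-1) := by
  obtain ⟨c', rfl⟩ : ∃ c', c = c' + 1 := ⟨c - 1, by omega⟩
  rcases Nat.eq_zero_or_pos b with hb | hb
  · -- b = 0, hence a = 0
    have ha : a = 0 := by omega
    subst hb; subst ha
    simp only [Fq, Nat.add_sub_cancel]
    rw [show 0 + 0 + (c' + 1) = (0 + 0 + c') + 1 from by omega,
      Nat.factorial_succ (0 + 0 + c'),
      show c' + 1 + 2 = (c' + 2) + 1 from by omega,
      Nat.factorial_succ (c' + 2)]
    have h1 := fact_cast_ne (0 + 0 + c')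
    have h2 := fact_cast_ne (c' + 2)
    have h3 := fact_cast_ne 0
    have h4 := fact_cast_ne 1
    push_cast
    field_simp
    ring
  · obtain ⟨b', rfl⟩ : ∃ b', b = b' + 1 := ⟨b - 1, by omega⟩
    rcases Nat.eq_zero_or_pos a with ha | ha
    · subst ha
      simp only [Fq, Nat.add_sub_cancel]
      rw [show 0 + (b' + 1) + (c' + 1) = (0 + b' + c' + 1) + 1 from by omega,
        Nat.factorial_succ (0 + b' + c' + 1),
        show 0 + b' + (c' + 1) = 0 + b' + c' + 1 from by omega,
        show 0 + (b' + 1) + c' = 0 + b' + c' + 1 from by omega,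
        show b' + 1 + 1 = (b' + 1) + 1 from rfl,
        Nat.factorial_succ (b' + 1),
        show c' + 1 + 2 = (c' + 2) + 1 from by omega,
        Nat.factorial_succ (c' + 2)]
      have h1 := fact_cast_ne (0 + b' + c' + 1)
      have h2 := fact_cast_ne (c' + 2)
      have h3 := fact_cast_ne (b' + 1)
      have h4 := fact_cast_ne 0
      push_cast
      field_simp
      ring
    · obtain ⟨a', rfl⟩ : ∃ a', a = a' + 1 := ⟨a - 1, by omega⟩
      simp only [Fq, Nat.add_sub_cancel]
      rw [show a' + 1 + (b' + 1) + (c' + 1) = (a' + b' + c' + 2) + 1 from by omega,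
        Nat.factorial_succ (a' + b' + c' + 2),
        show a' + (b' + 1) + (c' + 1) = a' + b' + c' + 2 from by omega,
        show a' + 1 + b' + (c' + 1) = a' + b' + c' + 2 from by omega,
        show a' + 1 + (b' + 1) + c' = a' + b' + c' + 2 from by omega,
        show b' + 1 + 1 = (b' + 1) + 1 from rfl,
        Nat.factorial_succ (b' + 1),
        show c' + 1 + 2 = (c' + 2) + 1 from by omega,
        Nat.factorial_succ (c' + 2),
        Nat.factorial_succ a']
      have h1 := fact_cast_ne (a' + b' + c' + 2)
      have h2 := fact_cast_ne (c' + 2)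
      have h3 := fact_cast_ne (b' + 1)
      have h4 := fact_cast_ne a'
      push_cast
      field_simp
      ring

lemma Fq_degenerate_b {a b c : ℕ} (hb : 1 ≤ b) (hab : a = b) : Fq a (b-1) c = 0 := by
  have hz : ((b-1 : ℕ) : ℚ) - (a : ℕ) + 1 = 0 := by
    subst hab
    rw [Nat.cast_sub hb]
    push_cast
    ring
  rw [Fq, hz]
  simp

lemma Fq_degenerate_c {a b c : ℕ} (hc : 1 ≤ c) (hbc : b = c) : Fq a b (c-1) = 0 := by
  have hz : ((c-1 : ℕ) : ℚ) - (b : ℕ) + 1 = 0 := by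
    subst hbc
    rw [Nat.cast_sub hc]
    push_cast
    ring
  rw [Fq, hz]
  simp

lemma gcount_eq_Fq : ∀ L a b c : ℕ, a + b + c = L →
    (gcount L a b c : ℚ) = if a ≤ b ∧ b ≤ c then Fq a b c else 0 := by
  intro L
  induction L with
  | zero =>
    intro a b c h
    obtain ⟨rfl, rfl, rfl⟩ : a = 0 ∧ b = 0 ∧ c = 0 := by omega
    rw [if_pos ⟨le_rfl, le_rfl⟩]
    have hz : ∀ (w : Fin 0 → Fin 3) (m : ℕ) (j : Fin 3), cnt3 w m j = 0 := by
      intro w m j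
      rw [cnt3_eq_sum]
      simp
    have hg : gcount 0 0 0 0 = 1 := by
      classical
      rw [gcount]
      rw [Finset.filter_true_of_mem (fun w _ => ⟨hz w 0 0, hz w 0 1, hz w 0 2,
        fun m _ => by rw [hz, hz, hz]; exact ⟨le_rfl, le_rfl⟩⟩)]
      simp
    rw [hg]
    norm_num [Fq, Nat.factorial]
  | succ L ih =>
    intro a b c h
    by_cases hcond : a ≤ b ∧ b ≤ c
    · obtain ⟨hab, hbc⟩ := hcond
      rw [if_pos ⟨hab, hbc⟩, gcount_succ L a b c hab hbc h]
      have hc : 1 ≤ c := by omega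
      push_cast
      have T0 : (gcount L (a-1) b c : ℚ) = if 1 ≤ a then Fq (a-1) b c else 0 := by
        rcases Nat.eq_zero_or_pos a with ha | ha
        · subst ha
          rw [gcount_eq_zero_of_sum_ne (by omega), if_neg (by omega)]
          simp
        · rw [ih (a-1) b c (by omega), if_pos (show 1 ≤ a from ha), if_pos ⟨by omega, hbc⟩]
      have T1 : (gcount L a (b-1) c : ℚ) = if 1 ≤ b then Fq a (b-1) c else 0 := by
        rcases Nat.eq_zero_or_pos b with hb | hb
        · have ha : a = 0 := by omega
          subst hb; subst ha
          rw [gcount_eq_zero_of_sum_ne (by omega), if_neg (by omega)]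
          simp
        · rw [ih a (b-1) c (by omega), if_pos (show 1 ≤ b from hb)]
          by_cases hab' : a ≤ b - 1
          · rw [if_pos ⟨hab', by omega⟩]
          · rw [if_neg (by tauto)]
            exact (Fq_degenerate_b hb (by omega)).symm
      have T2 : (gcount L a b (c-1) : ℚ) = Fq a b (c-1) := by
        rw [ih a b (c-1) (by omega)]
        by_cases hbc' : b ≤ c - 1
        · rw [if_pos ⟨hab, hbc'⟩]
        · rw [if_neg (by tauto)]
          exact (Fq_degenerate_c hc (by omega)).symm
      rw [T0, T1, T2]
      exact (Fq_rec a b c hab hbc hc).symm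
    · rw [if_neg hcond, gcount_eq_zero_of_not_le hcond]
      simp

open Classical in
lemma catalan3D_eq_gcount (n : ℕ) : catalan3D n = gcount (3*n) n n n := by
  classical
  rw [catalan3D, gcount]
  congr 1
  apply Finset.filter_congr
  intro w _
  have hcnt : ∀ j : Fin 3, cnt3 w (3*n) j = (Finset.univ.filter (fun i => w i = j)).card := by
    intro j
    rw [cnt3]
    congr 1
    apply Finset.filter_congr
    intro i _
    simp [i.isLt]
  constructor
  · rintro ⟨h1, h2⟩
    exact ⟨by rw [hcnt]; exact h1 0, by rw [hcnt]; exact h1 1, by rw [hcnt]; exact h1 2, h2⟩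
  · rintro ⟨h0, h1, h2, hg⟩
    refine ⟨?_, hg⟩
    intro j
    fin_cases j
    · rw [← hcnt]; exact h0
    · rw [← hcnt]; exact h1
    · rw [← hcnt]; exact h2


/-- the number of such paths equals `2·(3n)!/(n!·(n+1)!·(n+2)!)`,
the `n`-th 3-dimensional Catalan number (OEIS A005789). -/
theorem catalan3D_eq (n : ℕ) (hn : 0 < n) :
    (catalan3D n : ℚ)
      = 2 * ((3 * n).factorial : ℚ)
          / ((n.factorial : ℚ) * ((n + 1).factorial : ℚ) * ((n + 2).factorial : ℚ)) := by
  rw [catalan3D_eq_gcount, gcount_eq_Fq (3*n) n n n (by ring), if_pos ⟨le_rfl, le_rfl⟩,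
    Fq, show n + n + n = 3 * n from by ring]
  have h1 : ((n:ℚ) - n + 1) = 1 := by ring
  have h2 : ((n:ℚ) - n + 2) = 2 := by ring
  rw [h1, h2]
  ring
end
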